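/- For any function f on a finite nonempty type X and any q > 0, the q-maximum satisfies: max_x f(x) ≤ q-max(f) ≤ max_x f(x) - ln_q(1/|X|), where q-max(f) = sup over probability distributions P of (E_{X~P}[f(X)] + S_q(P)). -/

import Mathlib

open Real Finset

noncomputable def qlog (q x : ℝ) : ℝ :=
  if q = 1 then Real.log x else (x ^ (q - 1) - 1) / (q - 1)

noncomputable def qexp (q x : ℝ) : ℝ :=
  if q = 1 then Real.exp x else (max (1 + (q - 1) * x) 0) ^ (1 / (q - 1))

/-- The summand `-p · ln_q p` with the convention `0 · ln_q 0 = 0`. -/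
noncomputable def entTerm (q p : ℝ) : ℝ := if p = 0 then 0 else -p * qlog q p

def IsPmf {X : Type*} [Fintype X] (P : X → ℝ) : Prop :=
  (∀ x, 0 ≤ P x) ∧ ∑ x, P x = 1

/-- Tsallis entropy. -/
noncomputable def Sq {X : Type*} [Fintype X] (q : ℝ) (P : X → ℝ) : ℝ :=
  ∑ x, entTerm q (P x)

/-- The q-maximum operator. -/
noncomputable def qmax {X : Type*} [Fintype X] (q : ℝ) (f : X → ℝ) : ℝ :=
  sSup {y | ∃ P : X → ℝ, IsPmf P ∧ y = (∑ x, P x * f x) + Sq q P}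

/-!
The lower bound comes from point masses, which have zero entropy. For the upper bound,
`∑ P x * f x ≤ max f`, and `S_q` is a sum of the concave function `p ↦ -p ln_q p`, so by
Jensen with uniform weights it is maximised by the uniform distribution, where it equals
`-ln_q (1/|X|)`.
-/

lemma entTerm_one_left : entTerm 1 = negMulLog := by
  ext p
  rcases eq_or_ne p 0 with rfl | hp
  · simp [entTerm]
  · simp [entTerm, hp, qlog, negMulLog]

lemma entTerm_eq_of_ne_one {q : ℝ} (hq0 : q ≠ 0) (hq1 : q ≠ 1) {p : ℝ} (hp : 0 ≤ p) :
    entTerm q p = (p - p ^ q) / (q - 1) := by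
  rcases hp.eq_or_lt with rfl | hp
  · simp [entTerm, zero_rpow hq0]
  · have hpq : p ^ q = p ^ (q - 1) * p := by
      rw [← rpow_add_one hp.ne']
      norm_num
    have hq1' : q - 1 ≠ 0 := sub_ne_zero.mpr hq1
    rw [entTerm, if_neg hp.ne', qlog, if_neg hq1, hpq]
    field_simp
    ring

lemma entTerm_one_right (q : ℝ) : entTerm q 1 = 0 := by
  simp [entTerm, qlog]

lemma concaveOn_entTerm {q : ℝ} (hq : 0 < q) : ConcaveOn ℝ (Set.Ici 0) (entTerm q) := by
  rcases eq_or_ne q 1 with rfl | hq1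
  · rw [entTerm_one_left]
    exact concaveOn_negMulLog
  have hq1' : q - 1 ≠ 0 := sub_ne_zero.mpr hq1
  rcases hq1.lt_or_gt with hlt | hgt
  · have hc : ConcaveOn ℝ (Set.Ici 0) fun p : ℝ => p ^ q - p :=
      (strictConcaveOn_rpow hq hlt).concaveOn.sub (convexOn_id (convex_Ici 0))
    refine (hc.smul (c := 1 / (1 - q)) (by bound)).congr fun p hp => ?_
    have h1q : 1 - q ≠ 0 := sub_ne_zero.mpr hq1.symm
    rw [entTerm_eq_of_ne_one hq.ne' hq1 hp]
    simp only [smul_eq_mul]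
    field_simp
    ring
  · have hc : ConcaveOn ℝ (Set.Ici 0) fun p : ℝ => p - p ^ q :=
      (concaveOn_id (convex_Ici 0)).sub (convexOn_rpow hgt.le)
    refine (hc.smul (c := 1 / (q - 1)) (by bound)).congr fun p hp => ?_
    rw [entTerm_eq_of_ne_one hq.ne' hq1 hp]
    simp only [smul_eq_mul]
    field_simp

section Pmf

variable {X : Type*} [Fintype X]

lemma isPmf_pi_single [DecidableEq X] (x : X) : IsPmf (Pi.single x (1 : ℝ)) := by
  refine ⟨fun y => ?_, by simp⟩
  rcases eq_or_ne y x with rfl | hy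
  · simp
  · simp [hy]

lemma Sq_pi_single [DecidableEq X] (q : ℝ) (x : X) : Sq q (Pi.single x (1 : ℝ)) = 0 := by
  refine sum_eq_zero fun y _ => ?_
  rcases eq_or_ne y x with rfl | hy
  · simp [entTerm_one_right]
  · simp [hy, entTerm]

lemma sum_mul_le_iSup {P : X → ℝ} (hP : IsPmf P) (f : X → ℝ) :
    ∑ x, P x * f x ≤ ⨆ x, f x :=
  calc ∑ x, P x * f x ≤ ∑ x, P x * ⨆ y, f y :=
        sum_le_sum fun x _ =>
          mul_le_mul_of_nonneg_left (le_ciSup (Set.finite_range f).bddAbove x) (hP.1 x)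
    _ = ⨆ y, f y := by rw [← sum_mul, hP.2, one_mul]

lemma Sq_le_neg_qlog_inv_card [Nonempty X] {q : ℝ} (hq : 0 < q) {P : X → ℝ} (hP : IsPmf P) :
    Sq q P ≤ -qlog q (1 / (Fintype.card X : ℝ)) := by
  set n : ℝ := (Fintype.card X : ℝ)
  have hn : 0 < n := Nat.cast_pos.mpr Fintype.card_pos
  have hjensen : ∑ x, (1 / n) • entTerm q (P x) ≤ entTerm q (∑ x, (1 / n) • P x) :=
    (concaveOn_entTerm hq).le_map_sum (fun _ _ => by positivity)
      (by simp [n, hn.ne']) (fun x _ => hP.1 x)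
  rw [← smul_sum, ← smul_sum, hP.2, smul_eq_mul, smul_eq_mul, mul_one, entTerm,
    if_neg (by positivity)] at hjensen
  change 1 / n * Sq q P ≤ -(1 / n) * qlog q (1 / n) at hjensen
  calc Sq q P = n * (1 / n * Sq q P) := by field_simp
    _ ≤ n * (-(1 / n) * qlog q (1 / n)) := mul_le_mul_of_nonneg_left hjensen hn.le
    _ = -qlog q (1 / n) := by field_simp

end Pmf

theorem stmt6 {X : Type*} [Fintype X] [Nonempty X] (q : ℝ) (hq : 0 < q) (f : X → ℝ) :
    (⨆ x, f x) ≤ qmax q f ∧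
    qmax q f ≤ (⨆ x, f x) - qlog q (1 / (Fintype.card X : ℝ)) := by
  classical
  set S := {y | ∃ P : X → ℝ, IsPmf P ∧ y = (∑ x, P x * f x) + Sq q P}
  have hub : ∀ y ∈ S, y ≤ (⨆ x, f x) - qlog q (1 / (Fintype.card X : ℝ)) := by
    rintro _ ⟨P, hP, rfl⟩
    linarith [sum_mul_le_iSup hP f, Sq_le_neg_qlog_inv_card hq hP]
  have hmem : ∀ x, f x ∈ S := fun x =>
    ⟨Pi.single x 1, isPmf_pi_single x, by simp [Sq_pi_single, Pi.single_apply]⟩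
  exact ⟨ciSup_le fun x => le_csSup ⟨_, hub⟩ (hmem x),
    csSup_le ⟨_, hmem (Classical.arbitrary X)⟩ hub⟩
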